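/- The matrix P = !![5,-3,0,0; 0,0,1,0; 10,-5,0,0; 0,0,0,1] over ℚ is invertible, and conjugation by P normalizes the inverses of A and T: P⁻¹ * A⁻¹ * P = !![1,1,0,0; 0,1,1,-1; 0,0,1,-1; 5,5,5,-4] and P⁻¹ * T⁻¹ * P = !![1,0,0,0; 0,1,0,0; 0,0,1,1; 0,0,0,1], where A and T are regarded as matrices over ℚ. -/

import Mathlib

open Matrix

/-- The local monodromy of the quintic-mirror family around `λ = 0`. -/
def A : Matrix (Fin 4) (Fin 4) ℤ :=
  !![11, 8, -5, 0; 5, -4, -3, 1; 20, 15, -9, 0; 5, -5, -3, 1]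

/-- The local monodromy of the quintic-mirror family around `λ = 1`. -/
def T : Matrix (Fin 4) (Fin 4) ℤ :=
  !![1, 0, 0, 0; 0, 1, 0, -1; 0, 0, 1, 0; 0, 0, 0, 1]

/-- The normalizing matrix of Lemma 3.1. -/
def P : Matrix (Fin 4) (Fin 4) ℚ :=
  !![5, -3, 0, 0; 0, 0, 1, 0; 10, -5, 0, 0; 0, 0, 0, 1]

/-- `A` and `T`, regarded as matrices over `ℚ`. -/
noncomputable def AQ : Matrix (Fin 4) (Fin 4) ℚ := A.map (Int.cast : ℤ → ℚ)

noncomputable def TQ : Matrix (Fin 4) (Fin 4) ℚ := T.map (Int.cast : ℤ → ℚ)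


/-! Conjugating `M⁻¹` by `P` gives `B` as soon as `M * P * B = P`: this identity exhibits
`P * B * P⁻¹` as a right inverse of `M`, so no inverse other than that of `P` is ever computed. -/

theorem Matrix.inv_mul_inv_mul_eq_of_mul_mul_eq {n R : Type*} [Fintype n] [DecidableEq n]
    [CommRing R] {M P B : Matrix n n R} (hP : IsUnit P.det) (h : M * P * B = P) :
    P⁻¹ * M⁻¹ * P = B := by
  have hM : M⁻¹ = P * B * P⁻¹ := by
    apply Matrix.inv_eq_right_inv
    rw [← Matrix.mul_assoc, ← Matrix.mul_assoc, h, Matrix.mul_nonsing_inv P hP]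
  rw [hM, Matrix.mul_assoc, Matrix.mul_assoc, Matrix.nonsing_inv_mul P hP, Matrix.mul_one,
    ← Matrix.mul_assoc, Matrix.nonsing_inv_mul P hP, Matrix.one_mul]

theorem det_P : P.det = -5 := by
  rw [P, Matrix.det_succ_row_zero]
  simp [Fin.sum_univ_succ, Matrix.det_fin_three, Fin.succAbove_of_le_castSucc]
  norm_num

theorem AQ_mul_P_mul_eq_P : AQ * P * !![1, 1, 0, 0; 0, 1, 1, -1; 0, 0, 1, -1; 5, 5, 5, -4] = P := by
  ext i j
  fin_cases i <;> fin_cases j <;> simp [AQ, A, P, Matrix.mul_apply, Fin.sum_univ_four] <;> norm_num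

theorem TQ_mul_P_mul_eq_P : TQ * P * !![1, 0, 0, 0; 0, 1, 0, 0; 0, 0, 1, 1; 0, 0, 0, 1] = P := by
  ext i j
  fin_cases i <;> fin_cases j <;> simp [TQ, T, P, Matrix.mul_apply, Fin.sum_univ_four]

theorem normalization_lemma :
    IsUnit P ∧
    P⁻¹ * AQ⁻¹ * P = !![1, 1, 0, 0; 0, 1, 1, -1; 0, 0, 1, -1; 5, 5, 5, -4] ∧
    P⁻¹ * TQ⁻¹ * P = !![1, 0, 0, 0; 0, 1, 0, 0; 0, 0, 1, 1; 0, 0, 0, 1] := by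
  have hP : IsUnit P.det := by
    rw [det_P]
    norm_num
  exact ⟨(Matrix.isUnit_iff_isUnit_det P).mpr hP,
    Matrix.inv_mul_inv_mul_eq_of_mul_mul_eq hP AQ_mul_P_mul_eq_P,
    Matrix.inv_mul_inv_mul_eq_of_mul_mul_eq hP TQ_mul_P_mul_eq_P⟩
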